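/- arXiv:1404.6793 — 2 statements merged into one kernel-verified Lean document; each statement's English description precedes it below -/
import Mathlib

section
/- Let L be an m×m Metzler matrix with zero row sums whose associated directed graph is strongly connected, and let p = (p_1,…,p_m)ᵀ be the positive left eigenvector of L for eigenvalue 0, P = diag(p). Let C = diag(c_1,…,c_m) with c_i ∈ {0,1} and at least one c_i = 1, and let κ, ε > 0. Then the symmetric part of P(κL − κεC) is negative definite. -/
/-!
A matrix and its symmetric part have the same quadratic form. Because `L` has zero row sums and
`p` is a left null vector, `2 xᵀ P L x = −E(x)` with the Dirichlet energy
`E(x) = ∑ᵢⱼ pᵢ Lᵢⱼ (xᵢ − xⱼ)² ≥ 0` (Metzler, `p > 0`), so the form is `−(κ/2) E(x) − κε ∑ᵢ pᵢ cᵢ xᵢ²`.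
If `E(x) = 0` then `x` is constant along every edge, hence constant by strong connectivity,
and a nonzero constant vector is seen by any pinned node `cₖ = 1`.
-/

open Matrix Finset

variable {ι R : Type*}

namespace Matrix

variable [Fintype ι]

lemma dotProduct_transpose_mulVec_self [CommSemiring R] (M : Matrix ι ι R) (x : ι → R) :
    x ⬝ᵥ Mᵀ *ᵥ x = x ⬝ᵥ M *ᵥ x := by
  rw [dotProduct_mulVec, vecMul_transpose, dotProduct_comm]

lemma dotProduct_symmPart_mulVec_self [Field R] [CharZero R] (M : Matrix ι ι R) (x : ι → R) :
    x ⬝ᵥ ((1 / 2 : R) • (M + Mᵀ)) *ᵥ x = x ⬝ᵥ M *ᵥ x := by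
  rw [smul_mulVec, add_mulVec, dotProduct_smul, dotProduct_add, dotProduct_transpose_mulVec_self,
    smul_eq_mul]
  ring

lemma dotProduct_diagonal_mulVec_self [CommSemiring R] [DecidableEq ι] (d x : ι → R) :
    x ⬝ᵥ diagonal d *ᵥ x = ∑ i, d i * x i ^ 2 := by
  simp only [mulVec_diagonal, dotProduct]
  exact sum_congr rfl fun i _ => by ring

end Matrix

def dirichletEnergy [Fintype ι] [CommRing R] (L : Matrix ι ι R) (p x : ι → R) : R :=
  ∑ i, ∑ j, p i * L i j * (x i - x j) ^ 2

lemma two_mul_dotProduct_diagonal_mul_mulVec [Fintype ι] [CommRing R] [DecidableEq ι] {L : Matrix ι ι R}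
    {p : ι → R} (hrow : ∀ i, ∑ j, L i j = 0) (hpL : p ᵥ* L = 0) (x : ι → R) :
    2 * (x ⬝ᵥ (diagonal p * L) *ᵥ x) = -dirichletEnergy L p x := by
  have hrows : ∑ i, ∑ j, p i * L i j * x i ^ 2 = 0 :=
    sum_eq_zero fun i _ => by rw [← sum_mul, ← mul_sum, hrow i, mul_zero, zero_mul]
  have hcols : ∑ i, ∑ j, p i * L i j * x j ^ 2 = 0 := by
    rw [sum_comm]
    refine sum_eq_zero fun j _ => ?_
    have hcol : ∑ i, p i * L i j = 0 := by simpa [vecMul, dotProduct] using congrFun hpL j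
    rw [← sum_mul, hcol, zero_mul]
  have hform : x ⬝ᵥ (diagonal p * L) *ᵥ x = ∑ i, ∑ j, p i * L i j * x i * x j := by
    simp only [dotProduct, mulVec, diagonal_mul, mul_sum]
    exact sum_congr rfl fun i _ => sum_congr rfl fun j _ => by ring
  have hexpand : dirichletEnergy L p x = ∑ i, ∑ j, p i * L i j * x i ^ 2
      + ∑ i, ∑ j, p i * L i j * x j ^ 2 - 2 * ∑ i, ∑ j, p i * L i j * x i * x j := by
    simp only [dirichletEnergy, ← sum_add_distrib, mul_sum, ← sum_sub_distrib]
    exact sum_congr rfl fun i _ => sum_congr rfl fun j _ => by ring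
  rw [hexpand, hform, hrows, hcols]
  ring

section Metzler

variable [CommRing R] [LinearOrder R] [IsStrictOrderedRing R] {L : Matrix ι ι R} {p : ι → R}

lemma dirichletEnergy_term_nonneg (hMetzler : ∀ i j, i ≠ j → 0 ≤ L i j) (hp : ∀ i, 0 ≤ p i)
    (x : ι → R) (i j : ι) : 0 ≤ p i * L i j * (x i - x j) ^ 2 := by
  rcases eq_or_ne i j with rfl | hij
  · simp
  · exact mul_nonneg (mul_nonneg (hp i) (hMetzler i j hij)) (sq_nonneg _)

variable [Fintype ι]

lemma dirichletEnergy_nonneg (hMetzler : ∀ i j, i ≠ j → 0 ≤ L i j) (hp : ∀ i, 0 ≤ p i)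
    (x : ι → R) : 0 ≤ dirichletEnergy L p x :=
  sum_nonneg fun i _ => sum_nonneg fun j _ => dirichletEnergy_term_nonneg hMetzler hp x i j

lemma eq_of_dirichletEnergy_eq_zero (hMetzler : ∀ i j, i ≠ j → 0 ≤ L i j) (hp : ∀ i, 0 < p i)
    {x : ι → R} (hE : dirichletEnergy L p x = 0) {a b : ι} (hab : 0 < L a b) : x a = x b := by
  have hnn := dirichletEnergy_term_nonneg hMetzler (fun i => (hp i).le) x
  have hrow := (sum_eq_zero_iff_of_nonneg fun i _ => sum_nonneg fun j _ => hnn i j).1 hE a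
    (mem_univ a)
  have hterm := (sum_eq_zero_iff_of_nonneg fun j _ => hnn a j).1 hrow b (mem_univ b)
  have hsq : (x a - x b) ^ 2 = 0 :=
    (mul_eq_zero.1 hterm).resolve_left (mul_pos (hp a) hab).ne'
  exact sub_eq_zero.1 (pow_eq_zero_iff two_ne_zero |>.1 hsq)

lemma eq_of_dirichletEnergy_eq_zero_of_reflTransGen (hMetzler : ∀ i j, i ≠ j → 0 ≤ L i j)
    (hp : ∀ i, 0 < p i) {x : ι → R} (hE : dirichletEnergy L p x = 0) {a b : ι}
    (hab : Relation.ReflTransGen (fun a b => a ≠ b ∧ 0 < L a b) a b) : x a = x b := by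
  induction hab with
  | refl => rfl
  | tail _ hedge ih => exact ih.trans (eq_of_dirichletEnergy_eq_zero hMetzler hp hE hedge.2)

end Metzler

/-- For a strongly connected Metzler matrix L with zero row sums, positive left null
vector p, P = diag p and a nonzero 0/1 pinning matrix C = diag c, the symmetric part
of P(κL − κεC) is negative definite. -/
theorem pinned_laplacian_negdef (m : ℕ)
    (L : Matrix (Fin m) (Fin m) ℝ)
    (hMetzler : ∀ i j, i ≠ j → 0 ≤ L i j)
    (hrow : ∀ i, ∑ j, L i j = 0)
    (hconn : ∀ i j : Fin m, Relation.ReflTransGen (fun a b => a ≠ b ∧ 0 < L a b) i j)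
    (p : Fin m → ℝ) (hp : ∀ i, 0 < p i) (hpL : p ᵥ* L = 0)
    (c : Fin m → ℝ) (hc : ∀ i, c i = 0 ∨ c i = 1) (hc1 : ∃ i, c i = 1)
    (κ ε : ℝ) (hκ : 0 < κ) (hε : 0 < ε) :
    ∀ x : Fin m → ℝ, x ≠ 0 →
      x ⬝ᵥ ((1 / 2 : ℝ) •
        (Matrix.diagonal p * (κ • L - (κ * ε) • Matrix.diagonal c) +
          (Matrix.diagonal p * (κ • L - (κ * ε) • Matrix.diagonal c))ᵀ)).mulVec x < 0 := by
  intro x hx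
  obtain ⟨k, hk⟩ := hc1
  have hpin_term (i : Fin m) : 0 ≤ p i * c i * x i ^ 2 :=
    mul_nonneg (mul_nonneg (hp i).le ((hc i).elim (·.ge) (· ▸ zero_le_one))) (sq_nonneg _)
  have hE := dirichletEnergy_nonneg hMetzler (fun i => (hp i).le) x
  have hpos : 0 < dirichletEnergy L p x ∨ 0 < ∑ i, p i * c i * x i ^ 2 := by
    rcases hE.lt_or_eq with hE | hE
    · exact Or.inl hE
    have hxk : x k ≠ 0 := fun h0 => hx <| funext fun i => by
      rw [eq_of_dirichletEnergy_eq_zero_of_reflTransGen hMetzler hp hE.symm (hconn i k), h0,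
        Pi.zero_apply]
    refine Or.inr <| sum_pos' (fun i _ => hpin_term i) ⟨k, mem_univ k, ?_⟩
    rw [hk, mul_one]
    exact mul_pos (hp k) (by positivity)
  have hQ := two_mul_dotProduct_diagonal_mul_mulVec hrow hpL x
  rw [dotProduct_symmPart_mulVec_self, Matrix.mul_sub, mul_smul_comm, mul_smul_comm,
    diagonal_mul_diagonal, sub_mulVec, smul_mulVec, smul_mulVec, dotProduct_sub, dotProduct_smul,
    dotProduct_smul, dotProduct_diagonal_mulVec_self, smul_eq_mul, smul_eq_mul]
  have hpin := sum_nonneg fun i (_ : i ∈ univ) => hpin_term i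
  rcases hpos with h | h
  · nlinarith [mul_pos hκ h, mul_nonneg (mul_pos hκ hε).le hpin]
  · nlinarith [mul_nonneg hκ.le hE, mul_pos (mul_pos hκ hε) h]
end

section
/- Let L be an m×m Metzler matrix with zero row sums and strongly connected graph, P = diag(p) with p the positive left null vector of L, C = diag(c) with c ∈ {0,1}ᵐ not identically zero, and α > 0. Then there exist κ > 0 and ε > 0 such that the symmetric part of P(αI_m + κL − κεC) is negative definite. -/
/-! With `ε = 1` the quadratic form of `P(αI + κL - κC)` is `α xᵀPx + κ xᵀP(L - C)x`. Since
`L 1 = 0` and `pᵀL = 0`, the Metzler matrix `PL` has zero row and column sums, so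
`xᵀPLx = -½ ∑ p_i L_ij (x_i - x_j)²`; this is `≤ 0`, and `< 0` unless `x` is constant, by strong
connectivity. On a nonzero constant vector `-xᵀPCx < 0` instead, so `P(L - C)` is negative
definite. By compactness of the sphere its Rayleigh quotient is bounded away from `0`, while that
of `αP` is bounded, so a large `κ` makes the sum negative definite. -/

open Matrix

lemma Relation.ReflTransGen.exists_ne_of_ne {α β : Type*} {r : α → α → Prop} {f : α → β}
    {i j : α} (h : Relation.ReflTransGen r i j) (hf : f i ≠ f j) :
    ∃ a b, r a b ∧ f a ≠ f b := by
  induction h with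
  | refl => exact absurd rfl hf
  | @tail b c _ hbc ih =>
    by_cases hib : f i = f b
    · exact ⟨b, c, hbc, fun h => hf (hib.trans h)⟩
    · exact ih hib

namespace Matrix

lemma mul_sub_sq_nonneg_of_offDiag_nonneg {ι : Type*} {M : Matrix ι ι ℝ}
    (hM : ∀ i j, i ≠ j → 0 ≤ M i j) (x : ι → ℝ) (i j : ι) : 0 ≤ M i j * (x i - x j) ^ 2 := by
  by_cases hij : i = j
  · simp [hij]
  · exact mul_nonneg (hM i j hij) (sq_nonneg _)

variable {n : Type*} [Fintype n]

lemma dotProduct_half_add_transpose_mulVec (A : Matrix n n ℝ) (x : n → ℝ) :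
    x ⬝ᵥ ((1 / 2 : ℝ) • (A + Aᵀ)) *ᵥ x = x ⬝ᵥ A *ᵥ x := by
  rw [smul_mulVec, dotProduct_smul, add_mulVec, dotProduct_add, dotProduct_transpose_mulVec,
    smul_eq_mul]
  ring

lemma dotProduct_smul_mulVec_smul {R : Type*} [CommSemiring R] (A : Matrix n n R) (t : R)
    (x : n → R) : (t • x) ⬝ᵥ A *ᵥ (t • x) = t ^ 2 * (x ⬝ᵥ A *ᵥ x) := by
  rw [mulVec_smul, dotProduct_smul, smul_dotProduct, smul_eq_mul, smul_eq_mul]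
  ring

lemma dotProduct_self_pos {x : n → ℝ} (hx : x ≠ 0) : 0 < x ⬝ᵥ x := by
  simpa using dotProduct_star_self_pos_iff.mpr hx

lemma exists_max_rayleigh [Nonempty n] (A : Matrix n n ℝ) :
    ∃ μ, (∃ z ≠ 0, z ⬝ᵥ A *ᵥ z = μ * (z ⬝ᵥ z)) ∧ ∀ x, x ⬝ᵥ A *ᵥ x ≤ μ * (x ⬝ᵥ x) := by
  set R : (n → ℝ) → ℝ := fun x => (x ⬝ᵥ A *ᵥ x) / (x ⬝ᵥ x)
  have hR_smul : ∀ t ≠ (0 : ℝ), ∀ x, R (t • x) = R x := fun t ht x => by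
    simp only [R]
    rw [dotProduct_smul_mulVec_smul, smul_dotProduct, dotProduct_smul, smul_eq_mul, smul_eq_mul,
      ← mul_assoc, ← sq]
    exact mul_div_mul_left _ _ (pow_ne_zero 2 ht)
  have hS : (Metric.sphere (0 : n → ℝ) 1).Nonempty := ⟨fun _ => 1, by simp [pi_norm_const]⟩
  have hR_cont : ContinuousOn R (Metric.sphere 0 1) :=
    ContinuousOn.div (by fun_prop) (by fun_prop) fun x hx =>
      (dotProduct_self_pos (ne_zero_of_mem_sphere one_ne_zero ⟨x, hx⟩)).ne'
  obtain ⟨z, hzS, hz_max⟩ := (isCompact_sphere 0 1).exists_isMaxOn hS hR_cont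
  have hz : z ≠ 0 := ne_zero_of_mem_sphere one_ne_zero ⟨z, hzS⟩
  refine ⟨R z, ⟨z, hz, (div_mul_cancel₀ _ (dotProduct_self_pos hz).ne').symm⟩, fun x => ?_⟩
  by_cases hx : x = 0
  · simp [hx]
  have hxz : R x ≤ R z := by
    rw [← hR_smul ‖x‖⁻¹ (inv_ne_zero (norm_ne_zero_iff.mpr hx))]
    exact hz_max (by simpa using norm_smul_inv_norm (𝕜 := ℝ) hx)
  exact (div_le_iff₀ (dotProduct_self_pos hx)).mp hxz

lemma exists_pos_forall_dotProduct_add_smul_mulVec_neg (B N : Matrix n n ℝ)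
    (hN : ∀ x ≠ 0, x ⬝ᵥ N *ᵥ x < 0) :
    ∃ κ > (0 : ℝ), ∀ x ≠ 0, x ⬝ᵥ (B + κ • N) *ᵥ x < 0 := by
  rcases isEmpty_or_nonempty n with hn | hn
  · exact ⟨1, one_pos, fun x hx => absurd (Subsingleton.elim x 0) hx⟩
  obtain ⟨β, -, hB⟩ := exists_max_rayleigh B
  obtain ⟨ν, ⟨z, hz, hzν⟩, hN_le⟩ := exists_max_rayleigh N
  have hν : ν < 0 := neg_of_mul_neg_left (hzν ▸ hN z hz) (dotProduct_self_pos hz).le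
  set κ := (|β| + 1) / -ν
  have hκ : 0 < κ := div_pos (by positivity) (neg_pos.mpr hν)
  have hκν : κ * ν = -(|β| + 1) := by
    simp only [κ]
    field_simp [hν.ne]
  refine ⟨κ, hκ, fun x hx => ?_⟩
  rw [add_mulVec, dotProduct_add, smul_mulVec, dotProduct_smul, smul_eq_mul]
  calc x ⬝ᵥ B *ᵥ x + κ * (x ⬝ᵥ N *ᵥ x) ≤ β * (x ⬝ᵥ x) + κ * (ν * (x ⬝ᵥ x)) :=
        add_le_add (hB x) (mul_le_mul_of_nonneg_left (hN_le x) hκ.le)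
    _ = (β - |β| - 1) * (x ⬝ᵥ x) := by linear_combination (x ⬝ᵥ x) * hκν
    _ < 0 := mul_neg_of_neg_of_pos (by linarith [le_abs_self β]) (dotProduct_self_pos hx)

lemma sum_mul_sub_sq_eq_neg_two_mul_dotProduct_mulVec {R : Type*} [CommRing R]
    (M : Matrix n n R) (x : n → R) (hrow : ∀ i, ∑ j, M i j = 0) (hcol : ∀ j, ∑ i, M i j = 0) :
    ∑ i, ∑ j, M i j * (x i - x j) ^ 2 = -2 * (x ⬝ᵥ M *ᵥ x) := by
  have hleft : ∑ i, ∑ j, M i j * x i ^ 2 = 0 := by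
    simp [← Finset.sum_mul, hrow]
  have hright : ∑ i, ∑ j, M i j * x j ^ 2 = 0 := by
    rw [Finset.sum_comm]
    simp [← Finset.sum_mul, hcol]
  calc ∑ i, ∑ j, M i j * (x i - x j) ^ 2
      = ∑ i, ∑ j, M i j * x i ^ 2 - 2 * ∑ i, ∑ j, x i * M i j * x j
          + ∑ i, ∑ j, M i j * x j ^ 2 := by
        simp only [Finset.mul_sum, ← Finset.sum_sub_distrib, ← Finset.sum_add_distrib]
        exact Finset.sum_congr rfl fun i _ => Finset.sum_congr rfl fun j _ => by ring
    _ = -2 * (x ⬝ᵥ M *ᵥ x) := by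
        rw [hleft, hright, dot_mulVec_eq_sum_sum, Finset.sum_comm]
        ring

lemma dotProduct_mulVec_nonpos_of_offDiag_nonneg {M : Matrix n n ℝ}
    (hM : ∀ i j, i ≠ j → 0 ≤ M i j) (hrow : ∀ i, ∑ j, M i j = 0)
    (hcol : ∀ j, ∑ i, M i j = 0) (x : n → ℝ) : x ⬝ᵥ M *ᵥ x ≤ 0 := by
  have hsum := sum_mul_sub_sq_eq_neg_two_mul_dotProduct_mulVec M x hrow hcol
  have : 0 ≤ ∑ i, ∑ j, M i j * (x i - x j) ^ 2 :=
    Finset.sum_nonneg fun i _ => Finset.sum_nonneg fun j _ =>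
      mul_sub_sq_nonneg_of_offDiag_nonneg hM x i j
  linarith

lemma dotProduct_mulVec_neg_of_offDiag_nonneg {M : Matrix n n ℝ}
    (hM : ∀ i j, i ≠ j → 0 ≤ M i j) (hrow : ∀ i, ∑ j, M i j = 0)
    (hcol : ∀ j, ∑ i, M i j = 0) {x : n → ℝ} {a b : n} (hab : 0 < M a b) (hx : x a ≠ x b) :
    x ⬝ᵥ M *ᵥ x < 0 := by
  have hsum := sum_mul_sub_sq_eq_neg_two_mul_dotProduct_mulVec M x hrow hcol
  have hterm : 0 < M a b * (x a - x b) ^ 2 := by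
    have := sub_ne_zero.mpr hx
    positivity
  have : 0 < ∑ i, ∑ j, M i j * (x i - x j) ^ 2 :=
    Finset.sum_pos' (fun i _ => Finset.sum_nonneg fun j _ =>
        mul_sub_sq_nonneg_of_offDiag_nonneg hM x i j)
      ⟨a, Finset.mem_univ _, Finset.sum_pos'
        (fun j _ => mul_sub_sq_nonneg_of_offDiag_nonneg hM x a j) ⟨b, Finset.mem_univ _, hterm⟩⟩
  linarith

variable [DecidableEq n]

lemma dotProduct_diagonal_mulVec {R : Type*} [CommSemiring R] (d x : n → R) :
    x ⬝ᵥ diagonal d *ᵥ x = ∑ i, d i * x i ^ 2 := by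
  simp only [dotProduct, mulVec_diagonal]
  exact Finset.sum_congr rfl fun i _ => by ring

variable {L : Matrix n n ℝ} {p : n → ℝ}

lemma diagonal_mul_offDiag_nonneg (hL : ∀ i j, i ≠ j → 0 ≤ L i j) (hp : ∀ i, 0 ≤ p i) :
    ∀ i j, i ≠ j → 0 ≤ (diagonal p * L) i j := fun i j hij => by
  rw [diagonal_mul]
  exact mul_nonneg (hp i) (hL i j hij)

lemma sum_diagonal_mul_row_eq_zero (hrow : ∀ i, ∑ j, L i j = 0) (i : n) :
    ∑ j, (diagonal p * L) i j = 0 := by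
  simp [diagonal_mul, ← Finset.mul_sum, hrow]

lemma sum_diagonal_mul_col_eq_zero (hpL : p ᵥ* L = 0) (j : n) :
    ∑ i, (diagonal p * L) i j = 0 := by
  simpa [diagonal_mul, vecMul, dotProduct] using congrFun hpL j

lemma dotProduct_diagonal_mul_sub_diagonal_mulVec_neg (hL : ∀ i j, i ≠ j → 0 ≤ L i j)
    (hrow : ∀ i, ∑ j, L i j = 0)
    (hconn : ∀ i j, Relation.ReflTransGen (fun a b => 0 < L a b) i j)
    (hp : ∀ i, 0 < p i) (hpL : p ᵥ* L = 0) {c : n → ℝ} (hc : ∀ i, 0 ≤ c i)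
    (hc_pos : ∃ i, 0 < c i) {x : n → ℝ} (hx : x ≠ 0) :
    x ⬝ᵥ (diagonal p * (L - diagonal c)) *ᵥ x < 0 := by
  have hM := diagonal_mul_offDiag_nonneg hL fun i => (hp i).le
  have hM_row := sum_diagonal_mul_row_eq_zero (p := p) hrow
  have hM_col := sum_diagonal_mul_col_eq_zero hpL
  have hsplit : x ⬝ᵥ (diagonal p * (L - diagonal c)) *ᵥ x
      = x ⬝ᵥ (diagonal p * L) *ᵥ x - ∑ i, (p i * c i) * x i ^ 2 := by
    rw [Matrix.mul_sub, sub_mulVec, dotProduct_sub, diagonal_mul_diagonal,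
      dotProduct_diagonal_mulVec]
  have hpc : 0 ≤ ∑ i, (p i * c i) * x i ^ 2 :=
    Finset.sum_nonneg fun i _ => by have := hc i; have := hp i; positivity
  rw [hsplit]
  by_cases hconst : ∀ i j, x i = x j
  · obtain ⟨k, hk⟩ := Function.ne_iff.mp hx
    obtain ⟨i, hi⟩ := hc_pos
    have hxi : x i ≠ 0 := hconst i k ▸ hk
    have : 0 < ∑ i, (p i * c i) * x i ^ 2 :=
      Finset.sum_pos' (fun i _ => by have := hc i; have := hp i; positivity)
        ⟨i, Finset.mem_univ _, by have := hp i; positivity⟩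
    linarith [dotProduct_mulVec_nonpos_of_offDiag_nonneg hM hM_row hM_col x]
  · push Not at hconst
    obtain ⟨i, j, hij⟩ := hconst
    obtain ⟨a, b, hab, hxab⟩ := (hconn i j).exists_ne_of_ne hij
    have hM_ab : 0 < (diagonal p * L) a b := by
      rw [diagonal_mul]
      exact mul_pos (hp a) hab
    linarith [dotProduct_mulVec_neg_of_offDiag_nonneg hM hM_row hM_col hM_ab hxab]

end Matrix

theorem exists_gains_negdef_general (m : ℕ)
    (L : Matrix (Fin m) (Fin m) ℝ)
    (hMetzler : ∀ i j, i ≠ j → 0 ≤ L i j)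
    (hrow : ∀ i, ∑ j, L i j = 0)
    (hconn : ∀ i j : Fin m, Relation.ReflTransGen (fun a b => a ≠ b ∧ 0 < L a b) i j)
    (p : Fin m → ℝ) (hp : ∀ i, 0 < p i) (hpL : p ᵥ* L = 0)
    (c : Fin m → ℝ) (hc : ∀ i, c i = 0 ∨ c i = 1) (hc1 : ∃ i, c i = 1)
    (α : ℝ) :
    ∃ κ > (0 : ℝ), ∃ ε > (0 : ℝ),
      ∀ x : Fin m → ℝ, x ≠ 0 →
        x ⬝ᵥ ((1 / 2 : ℝ) •
          (Matrix.diagonal p * (α • (1 : Matrix (Fin m) (Fin m) ℝ) +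
              κ • L - (κ * ε) • Matrix.diagonal c) +
            (Matrix.diagonal p * (α • (1 : Matrix (Fin m) (Fin m) ℝ) +
              κ • L - (κ * ε) • Matrix.diagonal c))ᵀ)).mulVec x < 0 := by
  have hconn' i j : Relation.ReflTransGen (fun a b => 0 < L a b) i j :=
    Relation.ReflTransGen.mono (fun _ _ h => h.2) _ _ (hconn i j)
  have hc_nonneg i : 0 ≤ c i := by rcases hc i with h | h <;> simp [h]
  have hc_pos : ∃ i, 0 < c i := hc1.imp fun _ h => by simp [h]
  obtain ⟨κ, hκ, hneg⟩ := exists_pos_forall_dotProduct_add_smul_mulVec_neg (α • diagonal p)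
    (diagonal p * (L - diagonal c)) fun x hx =>
      dotProduct_diagonal_mul_sub_diagonal_mulVec_neg hMetzler hrow hconn' hp hpL hc_nonneg
        hc_pos hx
  refine ⟨κ, hκ, 1, one_pos, fun x hx => ?_⟩
  rw [dotProduct_half_add_transpose_mulVec]
  convert hneg x hx using 3
  rw [mul_one, add_sub_assoc, ← smul_sub, Matrix.mul_add, Matrix.mul_smul, Matrix.mul_smul,
    Matrix.mul_one]

/-- There exist κ, ε > 0 such that the symmetric part of P(αI + κL − κεC) is
negative definite, for strongly connected Metzler L with zero row sums. -/
theorem exists_gains_negdef (m : ℕ)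
    (L : Matrix (Fin m) (Fin m) ℝ)
    (hMetzler : ∀ i j, i ≠ j → 0 ≤ L i j)
    (hrow : ∀ i, ∑ j, L i j = 0)
    (hconn : ∀ i j : Fin m, Relation.ReflTransGen (fun a b => a ≠ b ∧ 0 < L a b) i j)
    (p : Fin m → ℝ) (hp : ∀ i, 0 < p i) (hpL : p ᵥ* L = 0)
    (c : Fin m → ℝ) (hc : ∀ i, c i = 0 ∨ c i = 1) (hc1 : ∃ i, c i = 1)
    (α : ℝ) (hα : 0 < α) :
    ∃ κ > (0 : ℝ), ∃ ε > (0 : ℝ),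
      ∀ x : Fin m → ℝ, x ≠ 0 →
        x ⬝ᵥ ((1 / 2 : ℝ) •
          (Matrix.diagonal p * (α • (1 : Matrix (Fin m) (Fin m) ℝ) +
              κ • L - (κ * ε) • Matrix.diagonal c) +
            (Matrix.diagonal p * (α • (1 : Matrix (Fin m) (Fin m) ℝ) +
              κ • L - (κ * ε) • Matrix.diagonal c))ᵀ)).mulVec x < 0 :=
  exists_gains_negdef_general m L hMetzler hrow hconn p hp hpL c hc hc1 α
end
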